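/- arXiv:1404.6299 — 4 statements merged into one kernel-verified Lean document; each statement's English description precedes it below -/
import Mathlib

section
/- Let H be a finite bipartite graph with partite sets X and T such that no vertex of T is isolated, and suppose that for every edge xy with x ∈ X and y ∈ T we have deg(y) ≥ deg(x). Then H has a matching saturating T. -/
/-!
Hall's condition holds for `T` by fractional double counting: give each edge `xy` with
`y ∈ T` the weight `1 / deg y`. The edges at a set `S ⊆ T` then weigh exactly `|S|`, while
`deg x ≤ deg y` bounds the weight arriving at each `x ∈ N(S)` by `1`, so `|S| ≤ |N(S)|`.
-/

open SimpleGraph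

namespace VizingTwoFactor

variable {V : Type*}

/-- The degree of a vertex, as the `ncard` of its neighbor set. -/
noncomputable def ndeg (G : SimpleGraph V) (v : V) : ℕ :=
  (G.neighborSet v).ncard

/-- `G` is bipartite with parts `X` and `T`. -/
def IsBipartiteWith (G : SimpleGraph V) (X T : Set V) : Prop :=
  Disjoint X T ∧ ∀ u v : V, G.Adj u v → (u ∈ X ∧ v ∈ T) ∨ (u ∈ T ∧ v ∈ X)

/-- The set of neighbors of a set of vertices. -/
def NSet (G : SimpleGraph V) (A : Set V) : Set V :=
  {v | ∃ a ∈ A, G.Adj a v}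

/-- `G` has a matching saturating the vertex set `T`. -/
def HasMatchingSaturating (G : SimpleGraph V) (T : Set V) : Prop :=
  ∃ M : G.Subgraph, M.IsMatching ∧ T ⊆ M.verts

/-- Number of (ordered) adjacent pairs with first coordinate in `A` and second in `B`;
for disjoint `A`, `B` this is the number of edges between `A` and `B`. -/
noncomputable def eBetween (G : SimpleGraph V) (A B : Set V) : ℕ :=
  {p : V × V | p.1 ∈ A ∧ p.2 ∈ B ∧ G.Adj p.1 p.2}.ncard

/-- Number of neighbors of `v` inside `A`. -/
noncomputable def degIn (G : SimpleGraph V) (A : Set V) (v : V) : ℕ :=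
  (G.neighborSet v ∩ A).ncard

/-- The vertex set (in `V`) of a connected component of an induced subgraph. -/
def csupp (G : SimpleGraph V) (U : Set V) (C : (G.induce U).ConnectedComponent) : Set V :=
  Subtype.val '' C.supp

/-- The odd components of `G − (S ∪ T)` w.r.t. `(S,T)`: components sending an odd
number of edges to `T`. -/
noncomputable def oddComps (G : SimpleGraph V) (S T : Set V) :
    Set ((G.induce (S ∪ T)ᶜ).ConnectedComponent) :=
  {C | Odd (eBetween G (csupp G (S ∪ T)ᶜ C) T)}

/-- `h_G(S,T)`: the number of odd components. -/
noncomputable def hNum (G : SimpleGraph V) (S T : Set V) : ℕ :=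
  (oddComps G S T).ncard

/-- `δ_G(S,T) = 2|S| + Σ_{v∈T} deg_{G−S}(v) − 2|T| − h_G(S,T)`. -/
noncomputable def deltaST (G : SimpleGraph V) (S T : Set V) : ℤ :=
  2 * S.ncard + (∑ᶠ v ∈ T, (degIn G Sᶜ v : ℤ)) - 2 * T.ncard - hNum G S T

/-- A barrier. -/
def IsBarrier (G : SimpleGraph V) (S T : Set V) : Prop :=
  Disjoint S T ∧ deltaST G S T ≤ -2

/-- A minimum barrier: minimizes `|S ∪ T|` among barriers. -/
def IsMinBarrier (G : SimpleGraph V) (S T : Set V) : Prop :=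
  IsBarrier G S T ∧ ∀ S' T' : Set V, IsBarrier G S' T' → (S ∪ T).ncard ≤ (S' ∪ T').ncard

/-- `G` has a 2-factor: a spanning subgraph in which every vertex has degree 2. -/
def HasTwoFactor (G : SimpleGraph V) : Prop :=
  ∃ H : SimpleGraph V, H ≤ G ∧ ∀ v : V, ndeg H v = 2

/-- `G` has a proper edge coloring with `k` colors. -/
def HasEdgeColoring (G : SimpleGraph V) (k : ℕ) : Prop :=
  ∃ f : G.edgeSet → Fin k, ∀ e₁ e₂ : G.edgeSet, e₁ ≠ e₂ →
    (∃ v : V, v ∈ (e₁ : Sym2 V) ∧ v ∈ (e₂ : Sym2 V)) → f e₁ ≠ f e₂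

/-- The chromatic index `χ'(G)`. -/
noncomputable def chromIdx (G : SimpleGraph V) : ℕ :=
  sInf {k | HasEdgeColoring G k}

/-- `Δ` is the maximum degree of `G`. -/
def IsMaxDegree (G : SimpleGraph V) (Δ : ℕ) : Prop :=
  (∀ v : V, ndeg G v ≤ Δ) ∧ ∃ v : V, ndeg G v = Δ

/-- `G` is `Δ`-critical: no isolated vertices, maximum degree `Δ`, `χ'(G) = Δ + 1`, and
`χ'(G − e) = Δ` for every edge `e`. -/
def IsDeltaCritical (G : SimpleGraph V) (Δ : ℕ) : Prop :=
  (∀ v : V, ∃ u : V, G.Adj v u) ∧ IsMaxDegree G Δ ∧ chromIdx G = Δ + 1 ∧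
    ∀ e ∈ G.edgeSet, chromIdx (G.deleteEdges {e}) = Δ

/-- `T` is an independent set in `G`. -/
def IsIndep (G : SimpleGraph V) (T : Set V) : Prop :=
  ∀ u ∈ T, ∀ v ∈ T, ¬ G.Adj u v

/-- The bipartite graph `H*` consisting of the edges of `G` between `V(G) \ T` and `T`. -/
def betweenGraph (G : SimpleGraph V) (T : Set V) : SimpleGraph V where
  Adj u v := G.Adj u v ∧ ((u ∉ T ∧ v ∈ T) ∨ (u ∈ T ∧ v ∉ T))
  symm := ⟨fun u v h => ⟨h.1.symm, h.2.elim (fun h' => Or.inr ⟨h'.2, h'.1⟩)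
    (fun h' => Or.inl ⟨h'.2, h'.1⟩)⟩⟩
  loopless := ⟨fun u h => G.loopless.irrefl u h.1⟩

end VizingTwoFactor

open Finset

namespace SimpleGraph

variable {V : Type*} {G : SimpleGraph V} [G.LocallyFinite]

theorem card_le_card_biUnion_neighborFinset_of_degree_le [DecidableEq V] {s : Finset V}
    (hpos : ∀ v ∈ s, 0 < G.degree v)
    (hdeg : ∀ v ∈ s, ∀ w, G.Adj v w → G.degree w ≤ G.degree v) :
    #s ≤ #(s.biUnion (G.neighborFinset ·)) := by
  set N := s.biUnion (G.neighborFinset ·)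
  have hdeg_pos {v w : V} (h : G.Adj v w) : (0 : ℚ) < G.degree w := by
    exact_mod_cast G.degree_pos_iff_exists_adj w |>.mpr ⟨v, h.symm⟩
  suffices (#s : ℚ) ≤ #N by exact_mod_cast this
  calc (#s : ℚ)
      = ∑ v ∈ s, ∑ _w ∈ G.neighborFinset v, ((G.degree v : ℚ))⁻¹ := by
        rw [card_eq_sum_ones, Nat.cast_sum]
        refine sum_congr rfl fun v hv => ?_
        rw [sum_const, card_neighborFinset_eq_degree, nsmul_eq_mul,
          mul_inv_cancel₀ (by exact_mod_cast (hpos v hv).ne'), Nat.cast_one]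
    _ ≤ ∑ v ∈ s, ∑ w ∈ G.neighborFinset v, ((G.degree w : ℚ))⁻¹ := by
        refine sum_le_sum fun v hv => sum_le_sum fun w hw => ?_
        rw [mem_neighborFinset] at hw
        exact inv_anti₀ (hdeg_pos hw) (by exact_mod_cast hdeg v hv w hw)
    _ = ∑ w ∈ N, ∑ _v ∈ s ∩ G.neighborFinset w, ((G.degree w : ℚ))⁻¹ :=
        sum_comm' fun v w => by simp only [N, mem_inter, mem_biUnion, mem_neighborFinset]; grind [adj_comm]
    _ ≤ ∑ w ∈ N, 1 := by
        refine sum_le_sum fun w hw => ?_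
        obtain ⟨v, -, hvw⟩ := mem_biUnion.mp hw
        rw [sum_const, nsmul_eq_mul, ← div_eq_mul_inv,
          div_le_one (hdeg_pos (G.mem_neighborFinset _ _ |>.mp hvw))]
        exact_mod_cast (card_le_card inter_subset_right).trans
          (G.card_neighborFinset_eq_degree w).le
    _ = #N := by simp

theorem ncard_le_ncard_iUnion_neighborSet_of_degree_le {s : Set V} (hs : s.Finite)
    (hpos : ∀ v ∈ s, 0 < G.degree v)
    (hdeg : ∀ v ∈ s, ∀ w, G.Adj v w → G.degree w ≤ G.degree v) :
    s.ncard ≤ (⋃ v ∈ s, G.neighborSet v).ncard := by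
  classical
  have := card_le_card_biUnion_neighborFinset_of_degree_le (s := hs.toFinset)
    (by simpa using hpos) (by simpa using hdeg)
  convert this using 1
  · exact Set.ncard_eq_toFinset_card s hs
  · rw [← Set.ncard_coe_finset, coe_biUnion]
    simp

end SimpleGraph

namespace VizingTwoFactor

variable {V : Type*}

theorem ndeg_eq_degree (G : SimpleGraph V) (v : V) [Fintype (G.neighborSet v)] :
    ndeg G v = G.degree v := by
  rw [ndeg, Set.ncard_eq_toFinset_card', ← neighborFinset_def, card_neighborFinset_eq_degree]

theorem IsBipartiteWith.isBipartiteWith {G : SimpleGraph V} {X T : Set V}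
    (h : IsBipartiteWith G X T) : G.IsBipartiteWith X T :=
  ⟨h.1, h.2⟩

theorem vizing_stmt_0 [Fintype V] (H : SimpleGraph V) (X T : Set V)
    (hbip : IsBipartiteWith H X T)
    (hnoiso : ∀ y ∈ T, ∃ x : V, H.Adj y x)
    (hdeg : ∀ x ∈ X, ∀ y ∈ T, H.Adj x y → ndeg H x ≤ ndeg H y) :
    HasMatchingSaturating H T := by
  classical
  have hTX : H.IsBipartiteWith T X := hbip.isBipartiteWith.symm
  obtain ⟨M, hTM, hM⟩ := exists_isMatching_of_forall_ncard_le hTX fun s hs =>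
    ncard_le_ncard_iUnion_neighborSet_of_degree_le s.toFinite
      (fun y hy => (H.degree_pos_iff_exists_adj y).mpr (hnoiso y (hs hy)))
      (fun y hy x hyx => by
        simpa only [ndeg_eq_degree] using
          hdeg x (isBipartiteWith_neighborSet_subset hTX (hs hy) hyx) y (hs hy) hyx.symm)
  exact ⟨M, hM, hTM⟩

end VizingTwoFactor
end

section
/- Let R be a finite bipartite graph with partite sets A and B. Let A₁ = {x ∈ A : deg_R(x) = 1} and B₁ = N_R(A₁). If the induced bipartite subgraph R' on (A \ A₁) ∪ (B \ B₁) has a matching saturating B \ B₁, then R has a matching saturating B. -/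
open SimpleGraph

namespace VizingTwoFactor

variable {V : Type*}

/-! Every vertex of `A₁` has a single neighbour, so the edges from `B₁` back into `A₁` form a
matching saturating `B₁` inside `A₁ ∪ B₁`; this is vertex-disjoint from the given matching of `R'`,
which lives in `(A \ A₁) ∪ (B \ B₁)`, and the union saturates `B`. -/

lemma IsBipartiteWith.nSet_subset {G : SimpleGraph V} {X T S : Set V}
    (h : IsBipartiteWith G X T) (hS : S ⊆ X) : NSet G S ⊆ T := by
  rintro v ⟨a, ha, hav⟩
  rcases h.2 a v hav with ⟨-, hv⟩ | ⟨haT, -⟩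
  · exact hv
  · exact absurd (hS ha) (h.1.notMem_of_mem_right haT)

lemma neighborSet_subsingleton_of_ndeg_eq_one {G : SimpleGraph V} {v : V} (h : ndeg G v = 1) :
    (G.neighborSet v).Subsingleton := by
  obtain ⟨w, hw⟩ := Set.ncard_eq_one.mp h
  exact hw ▸ Set.subsingleton_singleton

lemma exists_isMatching_of_induce {G : SimpleGraph V} {U T : Set V}
    (h : HasMatchingSaturating (G.induce U) (Subtype.val ⁻¹' T)) :
    ∃ M : G.Subgraph, M.IsMatching ∧ T ∩ U ⊆ M.verts ∧ M.verts ⊆ U := by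
  obtain ⟨M, hM, hTM⟩ := h
  let ι := SimpleGraph.Embedding.induce (G := G) U
  refine ⟨M.map ι.toHom, hM.map ι.toHom ι.injective, ?_, ?_⟩
  · rintro v ⟨hvT, hvU⟩
    exact ⟨⟨v, hvU⟩, hTM hvT, rfl⟩
  · rintro _ ⟨v, -, rfl⟩
    exact v.2

lemma exists_isMatching_nSet_of_subsingleton {G : SimpleGraph V} {P : Set V}
    (hP : ∀ a ∈ P, (G.neighborSet a).Subsingleton) (hind : Disjoint P (NSet G P)) :
    ∃ M : G.Subgraph, M.IsMatching ∧ NSet G P ⊆ M.verts ∧ M.verts ⊆ P ∪ NSet G P := by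
  choose f hfP hfadj using fun b : NSet G P => b.2
  have hf_inj : Function.Injective f := fun b b' hbb' =>
    Subtype.ext (hP _ (hfP b) (hfadj b) (hbb' ▸ hfadj b'))
  have hrange : Set.range f ⊆ P := Set.range_subset_iff.mpr hfP
  obtain ⟨M, hMverts, hM⟩ := Subgraph.IsMatching.exists_of_disjoint_sets_of_equiv
    (Set.disjoint_of_subset_right hrange hind.symm) (Equiv.ofInjective f hf_inj)
    fun b => (hfadj b).symm
  refine ⟨M, hM, hMverts ▸ Set.subset_union_left, ?_⟩
  rw [hMverts, Set.union_comm]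
  exact Set.union_subset_union_left _ hrange

theorem vizing_stmt_1_general (R : SimpleGraph V) (A B A₁ B₁ : Set V)
    (hbip : IsBipartiteWith R A B)
    (hA₁ : A₁ = {x ∈ A | ndeg R x = 1}) (hB₁ : B₁ = NSet R A₁)
    (hM : HasMatchingSaturating (R.induce ((A \ A₁) ∪ (B \ B₁)))
      (Subtype.val ⁻¹' (B \ B₁))) :
    HasMatchingSaturating R B := by
  have hA₁A : A₁ ⊆ A := hA₁ ▸ Set.sep_subset A _
  have hB₁B : B₁ ⊆ B := hB₁ ▸ hbip.nSet_subset hA₁A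
  have hpendant : ∀ a ∈ A₁, (R.neighborSet a).Subsingleton := fun a ha =>
    neighborSet_subsingleton_of_ndeg_eq_one (hA₁ ▸ ha).2
  obtain ⟨M₁, hM₁, hsat₁, hverts₁⟩ := exists_isMatching_of_induce hM
  obtain ⟨M₂, hM₂, hsat₂, hverts₂⟩ := exists_isMatching_nSet_of_subsingleton hpendant
    (hB₁ ▸ Set.disjoint_of_subset hA₁A hB₁B hbip.1)
  rw [← hB₁] at hsat₂ hverts₂
  have hdisj : Disjoint M₁.verts M₂.verts := by
    refine Set.disjoint_of_subset hverts₁ hverts₂ ?_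
    simp only [Set.disjoint_union_left, Set.disjoint_union_right]
    exact ⟨⟨Set.disjoint_sdiff_left, Set.disjoint_of_subset Set.sdiff_subset hA₁A hbip.1.symm⟩,
      Set.disjoint_of_subset Set.sdiff_subset hB₁B hbip.1, Set.disjoint_sdiff_left⟩
  refine ⟨M₁ ⊔ M₂, hM₁.sup hM₂ (hM₁.support_eq_verts ▸ hM₂.support_eq_verts ▸ hdisj), ?_⟩
  intro b hb
  by_cases hbB₁ : b ∈ B₁
  · exact Or.inr (hsat₂ hbB₁)
  · exact Or.inl (hsat₁ ⟨⟨hb, hbB₁⟩, Or.inr ⟨hb, hbB₁⟩⟩)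

theorem vizing_stmt_1 [Fintype V] (R : SimpleGraph V) (A B A₁ B₁ : Set V)
    (hbip : IsBipartiteWith R A B)
    (hA₁ : A₁ = {x ∈ A | ndeg R x = 1}) (hB₁ : B₁ = NSet R A₁)
    (hM : HasMatchingSaturating (R.induce ((A \ A₁) ∪ (B \ B₁)))
      (Subtype.val ⁻¹' (B \ B₁))) :
    HasMatchingSaturating R B :=
  vizing_stmt_1_general R A B A₁ B₁ hbip hA₁ hB₁ hM

end VizingTwoFactor
end

section
/- Let G be a Δ-critical graph and let T ⊆ V(G) be an independent set. Let X' = V(G) \ T and let H* be the bipartite graph on parts X' and T whose edges are exactly the edges of G between X' and T. Let δ₀ be the number of vertices of T whose degree in G equals Δ. Then for every edge xy of H* with x ∈ X' and y ∈ T, deg_{H*}(y) ≥ deg_{H*}(x) + 1 − δ₀ + σ_x, where σ_x is the number of neighbors of x in X' whose degree in G is less than Δ. -/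
open SimpleGraph

namespace VizingTwoFactor

variable {V : Type*}

/-!
In `H*` the vertex `y ∈ T` keeps all its `G`-neighbors (`T` is independent), while `x ∉ T` keeps
only those in `T`. Vizing's adjacency lemma gives `x` at least `Δ - deg y + 1` neighbors `z ≠ y`
of degree `Δ`. Those in `T` are counted by `δ₀`; those outside `T`, together with the `σ_x`
neighbors outside `T` of smaller degree, are among the `deg x - deg_{H*} x ≤ Δ - deg_{H*} x`
neighbors of `x` outside `T`.

The adjacency lemma is proved with multifans: in a `Δ`-coloring of `G - xy`, the vertices of a
maximal multifan at `x` have pairwise disjoint sets of missing colors (a Kempe-chain argument),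
none shared with `x`, and each of these colors is the color of a fan edge at `x`.
-/

open scoped Classical

section EdgeColoring

variable {C : Type*}

def IsProperEdgeColoring (H : SimpleGraph V) (c : Sym2 V → C) : Prop :=
  ∀ ⦃v a b⦄, H.Adj v a → H.Adj v b → c s(v, a) = c s(v, b) → a = b

def missingColors (H : SimpleGraph V) (c : Sym2 V → C) (v : V) : Set C :=
  {α | ∀ u, H.Adj v u → c s(v, u) ≠ α}

variable {H H' : SimpleGraph V} {c : Sym2 V → C} {u v w a : V} {α β γ : C}

lemma ncard_missingColors_add_ndeg [Finite C] (hc : IsProperEdgeColoring H c) (v : V) :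
    (missingColors H c v).ncard + ndeg H v = Nat.card C := by
  have hcompl : missingColors H c v = ((fun u => c s(v, u)) '' H.neighborSet v)ᶜ := by
    ext α
    simp [missingColors]
  have himage : ((fun u => c s(v, u)) '' H.neighborSet v).ncard = ndeg H v :=
    Set.InjOn.ncard_image fun a ha b hb => hc ha hb
  rw [hcompl, ← himage, add_comm, Set.ncard_add_ncard_compl]

lemma missingColors_eq_empty_iff [Finite C] (hc : IsProperEdgeColoring H c) :
    missingColors H c v = ∅ ↔ ndeg H v = Nat.card C := by
  rw [← Set.ncard_eq_zero, ← ncard_missingColors_add_ndeg hc v]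
  omega

lemma IsProperEdgeColoring.update (hc : IsProperEdgeColoring H c)
    (hH' : ∀ ⦃a b⦄, H'.Adj a b → H.Adj a b ∨ s(a, b) = s(u, v))
    (hu : α ∈ missingColors H c u) (hv : α ∈ missingColors H c v) :
    IsProperEdgeColoring H' (Function.update c s(u, v) α) := by
  have hmiss : ∀ ⦃w b⦄, w ∈ s(u, v) → H.Adj w b → c s(w, b) ≠ α := by
    intro w b hw hb
    rcases Sym2.mem_iff.mp hw with rfl | rfl
    exacts [hu b hb, hv b hb]
  intro w a b ha hb hab
  by_cases hea : s(w, a) = s(u, v) <;> by_cases heb : s(w, b) = s(u, v)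
  · exact Sym2.congr_right.mp (hea.trans heb.symm)
  · rw [hea, Function.update_self, Function.update_of_ne heb] at hab
    exact absurd hab.symm (hmiss (hea ▸ Sym2.mem_mk_left w a) ((hH' hb).resolve_right heb))
  · rw [heb, Function.update_self, Function.update_of_ne hea] at hab
    exact absurd hab (hmiss (heb ▸ Sym2.mem_mk_left w b) ((hH' ha).resolve_right hea))
  · rw [Function.update_of_ne hea, Function.update_of_ne heb] at hab
    exact hc ((hH' ha).resolve_right hea) ((hH' hb).resolve_right heb) hab

lemma missingColors_update_of_notMem (hw : w ∉ s(u, v)) :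
    missingColors H (Function.update c s(u, v) α) w = missingColors H c w := by
  have hc : ∀ a, Function.update c s(u, v) α s(w, a) = c s(w, a) := fun a =>
    Function.update_of_ne (fun h => hw (by rw [← h]; exact Sym2.mem_mk_left w a)) _ _
  simp only [missingColors, hc]

lemma IsProperEdgeColoring.mem_missingColors_update (hc : IsProperEdgeColoring H c)
    (hvw : H.Adj v w) (hα : α ≠ c s(v, w)) :
    c s(v, w) ∈ missingColors H (Function.update c s(v, w) α) v := by
  intro u hu
  by_cases huw : u = w
  · subst huw
    rwa [Function.update_self]
  · rw [Function.update_of_ne (by rwa [Ne, Sym2.congr_right])]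
    exact fun h => huw (hc hu hvw h)

def kempeGraph (H : SimpleGraph V) (c : Sym2 V → C) (α γ : C) : SimpleGraph V where
  Adj u v := H.Adj u v ∧ (c s(u, v) = α ∨ c s(u, v) = γ)
  symm := ⟨fun _ _ h => ⟨h.1.symm, by rw [Sym2.eq_swap]; exact h.2⟩⟩
  loopless := ⟨fun v h => H.loopless.irrefl v h.1⟩

lemma ncard_adj_color_le_one (hc : IsProperEdgeColoring H c) (v : V) (α : C) :
    {u | H.Adj v u ∧ c s(v, u) = α}.ncard ≤ 1 := by
  have hsub : {u | H.Adj v u ∧ c s(v, u) = α}.Subsingleton := fun _ ha _ hb =>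
    hc ha.1 hb.1 (ha.2.trans hb.2.symm)
  exact (Set.ncard_le_one hsub.finite).mpr hsub

lemma ncard_adj_color_eq_zero (h : α ∈ missingColors H c v) :
    {u | H.Adj v u ∧ c s(v, u) = α}.ncard = 0 := by
  have hempty : {u | H.Adj v u ∧ c s(v, u) = α} = ∅ :=
    Set.eq_empty_of_forall_notMem fun u hu => h u hu.1 hu.2
  rw [hempty, Set.ncard_empty]

lemma ndeg_kempeGraph_le (v : V) (α γ : C) :
    ndeg (kempeGraph H c α γ) v ≤
      {u | H.Adj v u ∧ c s(v, u) = α}.ncard + {u | H.Adj v u ∧ c s(v, u) = γ}.ncard := by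
  have : (kempeGraph H c α γ).neighborSet v =
      {u | H.Adj v u ∧ c s(v, u) = α} ∪ {u | H.Adj v u ∧ c s(v, u) = γ} := by
    ext u
    simp [kempeGraph, and_or_left]
  rw [ndeg, this]
  exact Set.ncard_union_le _ _

lemma ndeg_kempeGraph_le_two (hc : IsProperEdgeColoring H c) (v : V) (α γ : C) :
    ndeg (kempeGraph H c α γ) v ≤ 2 := by
  have := ndeg_kempeGraph_le (H := H) (c := c) v α γ
  have := ncard_adj_color_le_one hc v α
  have := ncard_adj_color_le_one hc v γ
  omega

lemma ndeg_kempeGraph_le_one (hc : IsProperEdgeColoring H c)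
    (hv : α ∈ missingColors H c v ∨ γ ∈ missingColors H c v) :
    ndeg (kempeGraph H c α γ) v ≤ 1 := by
  have := ndeg_kempeGraph_le (H := H) (c := c) v α γ
  have := ncard_adj_color_le_one hc v α
  have := ncard_adj_color_le_one hc v γ
  rcases hv with hv | hv <;> have := ncard_adj_color_eq_zero hv <;> omega

def IsKempeClosed (H : SimpleGraph V) (c : Sym2 V → C) (α γ : C) (S : Set V) : Prop :=
  ∀ ⦃u v⦄, u ∈ S → (kempeGraph H c α γ).Adj u v → v ∈ S

lemma isKempeClosed_reachable (w : V) :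
    IsKempeClosed H c α γ {v | (kempeGraph H c α γ).Reachable w v} :=
  fun _ _ hu huv => hu.trans huv.reachable

noncomputable def kempeSwap (c : Sym2 V → C) (S : Set V) (α γ : C) (e : Sym2 V) : C :=
  if ∃ v ∈ e, v ∈ S then Equiv.swap α γ (c e) else c e

variable {S : Set V}

lemma kempeSwap_adj (hS : IsKempeClosed H c α γ S)
    (h : H.Adj v a) :
    kempeSwap c S α γ s(v, a) = if v ∈ S then Equiv.swap α γ (c s(v, a)) else c s(v, a) := by
  by_cases hv : v ∈ S
  · rw [kempeSwap, if_pos ⟨v, Sym2.mem_mk_left v a, hv⟩, if_pos hv]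
  rw [kempeSwap, if_neg hv]
  split_ifs with hvaS
  · -- the edge leaves `S` through `a`, so it is not an `α`/`γ`-edge
    have ha : a ∈ S := by
      obtain ⟨w, hw, hwS⟩ := hvaS
      rcases Sym2.mem_iff.mp hw with rfl | rfl
      exacts [absurd hwS hv, hwS]
    have hcol : ¬(c s(a, v) = α ∨ c s(a, v) = γ) := fun hcol => hv (hS ha ⟨h.symm, hcol⟩)
    rw [Sym2.eq_swap, not_or] at hcol
    exact Equiv.swap_apply_of_ne_of_ne hcol.1 hcol.2
  · rfl

lemma IsProperEdgeColoring.kempeSwap (hc : IsProperEdgeColoring H c)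
    (hS : IsKempeClosed H c α γ S) :
    IsProperEdgeColoring H (kempeSwap c S α γ) := by
  intro v a b ha hb hab
  rw [kempeSwap_adj hS ha, kempeSwap_adj hS hb] at hab
  split_ifs at hab
  exacts [hc ha hb ((Equiv.swap α γ).injective hab), hc ha hb hab]

lemma missingColors_kempeSwap_of_notMem
    (hS : IsKempeClosed H c α γ S) (hv : v ∉ S) :
    missingColors H (kempeSwap c S α γ) v = missingColors H c v := by
  ext β
  exact forall₂_congr fun a ha => by rw [kempeSwap_adj hS ha, if_neg hv]

lemma mem_missingColors_kempeSwap_of_mem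
    (hS : IsKempeClosed H c α γ S) (hv : v ∈ S) :
    β ∈ missingColors H (kempeSwap c S α γ) v ↔ Equiv.swap α γ β ∈ missingColors H c v :=
  forall₂_congr fun a ha => by rw [kempeSwap_adj hS ha, if_pos hv, Ne, Equiv.swap_apply_eq_iff]

lemma mem_missingColors_kempeSwap_of_ne
    (hS : IsKempeClosed H c α γ S) (hα : β ≠ α) (hγ : β ≠ γ) :
    β ∈ missingColors H (kempeSwap c S α γ) v ↔ β ∈ missingColors H c v := by
  by_cases hv : v ∈ S
  · rw [mem_missingColors_kempeSwap_of_mem hS hv, Equiv.swap_apply_of_ne_of_ne hα hγ]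
  · rw [missingColors_kempeSwap_of_notMem hS hv]

end EdgeColoring

section PathComponents

variable {K : SimpleGraph V}

lemma ncard_neighborSet_toSimpleGraph (D : K.ConnectedComponent) (v : D) :
    (D.toSimpleGraph.neighborSet v).ncard = ndeg K v := by
  have hrange : K.neighborSet v ⊆ Set.range ((↑) : D → V) := fun w hw =>
    ⟨⟨w, (D.mem_supp_congr_adj hw).mp v.2⟩, rfl⟩
  rw [ndeg, ← Set.ncard_preimage_of_injective_subset_range Subtype.val_injective hrange]
  rfl

/-- The component of `a` has at least `|D| - 1` edges, but its degree sum is at most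
`2 |D| - 3`. -/
lemma false_of_three_ndeg_le_one [Finite V] (hdeg : ∀ v, ndeg K v ≤ 2) {a b d : V}
    (hb : K.Reachable a b) (hd : K.Reachable a d) (hab : a ≠ b) (had : a ≠ d) (hbd : b ≠ d)
    (ha1 : ndeg K a ≤ 1) (hb1 : ndeg K b ≤ 1) (hd1 : ndeg K d ≤ 1) : False := by
  have := Fintype.ofFinite V
  set D := K.connectedComponentMk a
  let a' : D := ⟨a, rfl⟩
  let b' : D := ⟨b, (SimpleGraph.ConnectedComponent.sound hb).symm⟩
  let d' : D := ⟨d, (SimpleGraph.ConnectedComponent.sound hd).symm⟩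
  set ends : Finset D := {a', b', d'}
  have hends : ends.card = 3 := by
    rw [Finset.card_eq_three]
    exact ⟨a', b', d', fun h => hab congr($h.1), fun h => had congr($h.1),
      fun h => hbd congr($h.1), rfl⟩
  have hdegD : ∀ v : D, D.toSimpleGraph.degree v = ndeg K v := fun v => by
    rw [← ncard_neighborSet_toSimpleGraph, ← card_neighborSet_eq_degree,
      ← Nat.card_eq_fintype_card, Nat.card_coe_set_eq]
  have hsum : ∑ v, D.toSimpleGraph.degree v + ends.card ≤ 2 * Fintype.card D := by
    calc ∑ v, D.toSimpleGraph.degree v + ends.card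
        = ∑ v, (D.toSimpleGraph.degree v + if v ∈ ends then 1 else 0) := by
          rw [Finset.sum_add_distrib, Finset.sum_boole, Finset.filter_mem_eq_inter,
            Finset.univ_inter, Nat.cast_id]
      _ ≤ ∑ _v : D, 2 := by
          refine Finset.sum_le_sum fun v _ => ?_
          rw [hdegD]
          split_ifs with hv
          · simp only [ends, Finset.mem_insert, Finset.mem_singleton] at hv
            rcases hv with rfl | rfl | rfl
            exacts [Nat.succ_le_succ ha1, Nat.succ_le_succ hb1, Nat.succ_le_succ hd1]
          · have := hdeg v
            omega
      _ = 2 * Fintype.card D := by rw [Finset.sum_const, smul_eq_mul, mul_comm, Finset.card_univ]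
  have hedges := D.connected_toSimpleGraph.card_vert_le_card_edgeSet_add_one
  rw [Nat.card_eq_fintype_card, Nat.card_eq_fintype_card, ← edgeFinset_card] at hedges
  have := D.toSimpleGraph.sum_degrees_eq_twice_card_edges
  omega

end PathComponents

section Multifan

variable {C : Type*} {H : SimpleGraph V} {c c' : Sym2 V → C} {x y : V} {F : ℕ → V}
  {p q i j : ℕ} {α γ : C}

/-- Every proper `C`-edge-coloring of `H` fails to extend to the new edge `xy`. -/
def IsCriticalPair (H : SimpleGraph V) (C : Type*) (x y : V) : Prop :=
  ∀ c : Sym2 V → C, IsProperEdgeColoring H c → Disjoint (missingColors H c x) (missingColors H c y)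

/-- A multifan at `x` with respect to the uncolored edge `xy = x (F 0)`. -/
structure IsMultifan (H : SimpleGraph V) (c : Sym2 V → C) (x y : V) (F : ℕ → V) (p : ℕ) :
    Prop where
  zero : F 0 = y
  adj : ∀ i, 0 < i → i < p → H.Adj x (F i)
  injOn : Set.InjOn F (Set.Iio p)
  missing : ∀ i, 0 < i → i < p → ∃ j < i, c s(x, F i) ∈ missingColors H c (F j)

namespace IsMultifan

lemma ne_of_ne (hF : IsMultifan H c x y F p) (hi : i < p) (hj : j < p) (hij : i ≠ j) :
    F i ≠ F j :=
  hF.injOn.ne hi hj hij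

lemma ne_center (hF : IsMultifan H c x y F p) (hxy : x ≠ y) (hi : i < p) : F i ≠ x := by
  rcases Nat.eq_zero_or_pos i with rfl | hi0
  · exact hF.zero ▸ hxy.symm
  · exact (hF.adj i hi0 hi).ne.symm

lemma recolor (hF : IsMultifan H c x y F p) (hq : q ≤ p)
    (h : ∀ t, 0 < t → t < q → ∃ s < t, c' s(x, F t) ∈ missingColors H c' (F s)) :
    IsMultifan H c' x y F q :=
  ⟨hF.zero, fun i hi0 hi => hF.adj i hi0 (by omega),
    hF.injOn.mono fun _ hi => lt_of_lt_of_le hi hq, h⟩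

lemma extend (hF : IsMultifan H c x y F p) (hp : 0 < p) {z : V} (hz : H.Adj x z)
    (hzF : ∀ i < p, F i ≠ z) {t : ℕ} (ht : t < p) (hzt : c s(x, z) ∈ missingColors H c (F t)) :
    IsMultifan H c x y (Function.update F p z) (p + 1) := by
  have hF' : ∀ i < p, Function.update F p z i = F i := fun i hi =>
    Function.update_of_ne hi.ne _ _
  refine ⟨(hF' 0 hp).trans hF.zero, fun i hi0 hi => ?_, fun i hi j hj hij => ?_,
    fun i hi0 hi => ?_⟩
  · rcases (Nat.lt_succ_iff_lt_or_eq.mp hi) with hi | rfl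
    · exact hF' i hi ▸ hF.adj i hi0 hi
    · rwa [Function.update_self]
  · simp only [Set.mem_Iio, Nat.lt_succ_iff_lt_or_eq] at hi hj
    rcases hi with hi | rfl <;> rcases hj with hj | rfl
    · exact hF.injOn hi hj (by rwa [hF' i hi, hF' j hj] at hij)
    · exact absurd (by rwa [hF' i hi, Function.update_self] at hij) (hzF i hi)
    · exact absurd (by rwa [hF' j hj, Function.update_self] at hij) (hzF j hj).symm
    · rfl
  · rcases (Nat.lt_succ_iff_lt_or_eq.mp hi) with hi | rfl
    · obtain ⟨j, hji, hj⟩ := hF.missing i hi0 hi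
      exact ⟨j, hji, by rwa [hF' i hi, hF' j (by omega)]⟩
    · exact ⟨t, ht, by rwa [Function.update_self, hF' t ht]⟩

/-- If a color missing at `x` were missing at `F i`, recoloring `x (F i)` with it would make
the color of `x (F i)` missing at `x` and at an earlier fan vertex. -/
theorem disjoint_missingColors_center (hcrit : IsCriticalPair H C x y) (hxy : x ≠ y)
    (hc : IsProperEdgeColoring H c) (hF : IsMultifan H c x y F p) (hi : i < p) :
    Disjoint (missingColors H c x) (missingColors H c (F i)) := by
  induction i using Nat.strong_induction_on generalizing c p with
  | _ i IH =>
  rcases Nat.eq_zero_or_pos i with rfl | hi0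
  · exact hF.zero ▸ hcrit c hc
  rw [Set.disjoint_left]
  intro α hαx hαi
  obtain ⟨j, hji, hβj⟩ := hF.missing i hi0 hi
  have hadj := hF.adj i hi0 hi
  have hnotMem : ∀ s < i, F s ∉ s(x, F i) := fun s hs => by
    simp [hF.ne_center hxy (hs.trans hi), hF.ne_of_ne (hs.trans hi) hi hs.ne]
  have hc' := hc.update (H' := H) (fun _ _ h => Or.inl h) hαx hαi
  have hF' : IsMultifan H (Function.update c s(x, F i) α) x y F (j + 1) := by
    refine hF.recolor (by omega) fun t ht0 ht => ?_
    obtain ⟨s, hst, hs⟩ := hF.missing t ht0 (by omega)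
    have hxt : s(x, F t) ≠ s(x, F i) := fun h => hnotMem t (by omega) (h ▸ Sym2.mem_mk_right _ _)
    exact ⟨s, hst, by
      rwa [Function.update_of_ne hxt, missingColors_update_of_notMem (hnotMem s (by omega))]⟩
  refine Set.disjoint_left.mp (IH j hji hc' hF' (by omega))
    (hc.mem_missingColors_update hadj fun h => hαx (F i) hadj h.symm) ?_
  rwa [missingColors_update_of_notMem (hnotMem j hji)]

/-- Swapping `α` and `γ` on the Kempe chain through `F k` makes `γ` missing both at `x` and at
`F k`, provided the chain avoids `x` and the fan up to `F k` survives the swap. -/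
lemma false_of_kempeSwap (hcrit : IsCriticalPair H C x y) (hxy : x ≠ y)
    (hc : IsProperEdgeColoring H c) (hF : IsMultifan H c x y F p) {k : ℕ} (hk : k < p)
    (hαk : α ∈ missingColors H c (F k)) (hγx : γ ∈ missingColors H c x)
    (hx : ¬(kempeGraph H c α γ).Reachable (F k) x)
    (hfan : ∀ t, 0 < t → t ≤ k → c s(x, F t) = α →
      ∃ s < t, α ∈ missingColors H c (F s) ∧ ¬(kempeGraph H c α γ).Reachable (F k) (F s)) :
    False := by
  set S := {v | (kempeGraph H c α γ).Reachable (F k) v}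
  have hS : IsKempeClosed H c α γ S := isKempeClosed_reachable (F k)
  have hkS : F k ∈ S := SimpleGraph.Reachable.refl _
  have hxS : x ∉ S := hx
  have hcx : ∀ t, 0 < t → t < p → kempeSwap c S α γ s(x, F t) = c s(x, F t) := fun t ht0 ht => by
    rw [kempeSwap_adj hS (hF.adj t ht0 ht), if_neg hxS]
  have hF' : IsMultifan H (kempeSwap c S α γ) x y F (k + 1) := by
    refine hF.recolor (by omega) fun t ht0 ht => ?_
    rw [hcx t ht0 (by omega)]
    by_cases hβ : c s(x, F t) = α
    · obtain ⟨s, hst, hαs, hsS⟩ := hfan t ht0 (by omega) hβ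
      exact ⟨s, hst, by rwa [hβ, missingColors_kempeSwap_of_notMem hS hsS]⟩
    · obtain ⟨s, hst, hs⟩ := hF.missing t ht0 (by omega)
      exact ⟨s, hst, (mem_missingColors_kempeSwap_of_ne hS hβ
        fun h => hγx _ (hF.adj t ht0 (by omega)) h).mpr hs⟩
  refine Set.disjoint_left.mp (disjoint_missingColors_center hcrit hxy (hc.kempeSwap hS) hF'
    (Nat.lt_succ_self k)) (by rwa [missingColors_kempeSwap_of_notMem hS hxS]) ?_
  rwa [mem_missingColors_kempeSwap_of_mem hS hkS, Equiv.swap_apply_right]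

/-- `x`, the first fan vertex missing `α`, and `F j` are ends of `(α, γ)`-chains, so no single
chain contains all three. -/
theorem disjoint_missingColors [Finite V] (hcrit : IsCriticalPair H C x y) (hxy : x ≠ y)
    (hc : IsProperEdgeColoring H c) (hF : IsMultifan H c x y F p)
    (hγx : γ ∈ missingColors H c x) (hij : i < j) (hj : j < p) :
    Disjoint (missingColors H c (F i)) (missingColors H c (F j)) := by
  rw [Set.disjoint_left]
  intro α hαi hαj
  have hex : ∃ s, α ∈ missingColors H c (F s) := ⟨i, hαi⟩
  set i₀ := Nat.find hex
  have hi₀ : α ∈ missingColors H c (F i₀) := Nat.find_spec hex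
  have hi₀i : i₀ ≤ i := Nat.find_min' hex hαi
  have hafter : ∀ t, 0 < t → t < p → c s(x, F t) = α → i₀ < t := fun t ht0 ht hβ => by
    obtain ⟨s, hst, hs⟩ := hF.missing t ht0 ht
    exact lt_of_le_of_lt (Nat.find_min' hex (hβ ▸ hs)) hst
  have hxi₀ : x ≠ F i₀ := (hF.ne_center hxy (by omega)).symm
  have hxj : x ≠ F j := (hF.ne_center hxy hj).symm
  have hi₀j : F i₀ ≠ F j := hF.ne_of_ne (by omega) hj (by omega)
  by_cases hreach : (kempeGraph H c α γ).Reachable (F i₀) x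
  · have hjx : ¬(kempeGraph H c α γ).Reachable (F j) x := fun h =>
      false_of_three_ndeg_le_one (fun v => ndeg_kempeGraph_le_two hc v α γ) hreach.symm h.symm
        hxi₀ hxj hi₀j (ndeg_kempeGraph_le_one hc (Or.inr hγx))
        (ndeg_kempeGraph_le_one hc (Or.inl hi₀)) (ndeg_kempeGraph_le_one hc (Or.inl hαj))
    refine hF.false_of_kempeSwap hcrit hxy hc hj hαj hγx hjx fun t ht0 htj hβ =>
      ⟨i₀, hafter t ht0 (by omega) hβ, hi₀, fun h => hjx (h.trans hreach)⟩
  · exact hF.false_of_kempeSwap hcrit hxy hc (by omega) hi₀ hγx hreach fun t ht0 hti₀ hβ =>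
      absurd (hafter t ht0 (by omega) hβ) (by omega)

end IsMultifan

end Multifan

section Counting

variable {C : Type*}

lemma ncard_le_ncard_filter_eq_empty [Finite C] {M : ℕ → Set C} {f : ℕ → C} {p : ℕ}
    (hp : 0 < p) (hdisj : (Set.Iio p).PairwiseDisjoint M)
    (hsub : ∀ t < p, M t ⊆ f '' Set.Ioo 0 p) :
    (M 0).ncard ≤ {t ∈ Set.Ioo 0 p | M t = ∅}.ncard := by
  set I := Finset.Ioo 0 p
  have hrange : Finset.range p = insert 0 I := by
    ext t
    simp only [Finset.mem_range, Finset.mem_insert, I, Finset.mem_Ioo]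
    omega
  have hunion : ∑ t ∈ Finset.range p, (M t).ncard = (⋃ t ∈ Set.Iio p, M t).ncard := by
    rw [(Set.finite_Iio p).ncard_biUnion (fun _ _ => Set.toFinite _) hdisj,
      ← Finset.coe_range, finsum_mem_coe_finset]
  have himage : (⋃ t ∈ Set.Iio p, M t).ncard ≤ I.card :=
    calc (⋃ t ∈ Set.Iio p, M t).ncard ≤ (f '' Set.Ioo 0 p).ncard :=
          Set.ncard_le_ncard (Set.iUnion₂_subset fun t ht => hsub t ht)
      _ ≤ (Set.Ioo 0 p).ncard := Set.ncard_image_le (Set.finite_Ioo 0 p)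
      _ = I.card := by rw [← Finset.coe_Ioo, Set.ncard_coe_finset]
  have hnonempty : (I.filter fun t => ¬M t = ∅).card ≤ ∑ t ∈ I, (M t).ncard := by
    rw [Finset.card_filter]
    refine Finset.sum_le_sum fun t _ => ?_
    split_ifs with ht
    · exact Nat.zero_le _
    · exact (Set.ncard_pos (Set.toFinite _)).mpr (Set.nonempty_iff_ne_empty.mpr ht)
  have hsplit := Finset.card_filter_add_card_filter_not (s := I) (fun t => M t = ∅)
  have hempty : {t ∈ Set.Ioo 0 p | M t = ∅}.ncard = (I.filter fun t => M t = ∅).card := by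
    rw [← Set.ncard_coe_finset, Finset.coe_filter]
    simp [I]
  rw [hrange, Finset.sum_insert (by simp [I])] at hunion
  omega

end Counting

section Adjacency

variable {C : Type*} {H : SimpleGraph V} {c : Sym2 V → C} {x y : V}

lemma exists_maximal_multifan [Finite V] (H : SimpleGraph V) (c : Sym2 V → C) (x y : V) :
    ∃ F p, 0 < p ∧ IsMultifan H c x y F p ∧ ∀ F', ¬IsMultifan H c x y F' (p + 1) := by
  have hbound : ∀ {F q}, IsMultifan H c x y F q → q ≤ Nat.card V := fun {F q} hF => by
    simpa using Nat.card_le_card_of_injective (fun i : Fin q => F i)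
      fun i j hij => Fin.ext (hF.injOn i.2 j.2 hij)
  have hP1 : ∃ F, IsMultifan H c x y F 1 :=
    ⟨fun _ => y, rfl, by omega, fun i hi j hj _ => by simp_all, by omega⟩
  have hN := hbound hP1.choose_spec
  obtain ⟨F, hF⟩ := Nat.findGreatest_spec (P := fun q => ∃ F, IsMultifan H c x y F q) hN hP1
  exact ⟨F, _, Nat.le_findGreatest hN hP1, hF, fun F' hF' =>
    Nat.findGreatest_is_greatest (Nat.lt_succ_self _) (hbound hF') ⟨F', hF'⟩⟩

/-- Vizing's adjacency lemma, in terms of a coloring of `G - xy`: take a maximal multifan at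
`x`; its vertices have pairwise disjoint sets of missing colors, all of which are colors of
fan edges at `x`, so the colors missing at `y` are paid for by fan vertices missing nothing. -/
theorem IsCriticalPair.ncard_missingColors_le [Finite V] [Finite C]
    (hcrit : IsCriticalPair H C x y) (hxy : x ≠ y) (hnadj : ¬H.Adj x y)
    (hc : IsProperEdgeColoring H c) (hx : (missingColors H c x).Nonempty) :
    (missingColors H c y).ncard ≤ {z | H.Adj x z ∧ missingColors H c z = ∅}.ncard := by
  obtain ⟨γ, hγ⟩ := hx
  obtain ⟨F, p, hp, hF, hmax⟩ := exists_maximal_multifan H c x y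
  have hcover : ∀ t < p, missingColors H c (F t) ⊆ (fun s => c s(x, F s)) '' Set.Ioo 0 p := by
    intro t ht α hα
    have hαx : α ∉ missingColors H c x := fun h =>
      Set.disjoint_left.mp (hF.disjoint_missingColors_center hcrit hxy hc ht) h hα
    obtain ⟨z, hz, rfl⟩ : ∃ z, H.Adj x z ∧ c s(x, z) = α := by
      simpa [missingColors] using hαx
    by_cases hzF : ∃ s < p, F s = z
    · obtain ⟨s, hs, rfl⟩ := hzF
      have hs0 : s ≠ 0 := by
        rintro rfl
        exact hnadj (hF.zero ▸ hz)
      exact ⟨s, ⟨Nat.pos_of_ne_zero hs0, hs⟩, rfl⟩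
    · exact (hmax _ (hF.extend hp hz (fun s hs h => hzF ⟨s, hs, h⟩) ht hα)).elim
  have hdisj : (Set.Iio p).PairwiseDisjoint (missingColors H c ∘ F) := by
    intro i hi j hj hij
    rcases Nat.lt_or_gt_of_ne hij with h | h
    · exact hF.disjoint_missingColors hcrit hxy hc hγ h hj
    · exact (hF.disjoint_missingColors hcrit hxy hc hγ h hi).symm
  calc (missingColors H c y).ncard = (missingColors H c (F 0)).ncard := by rw [hF.zero]
    _ ≤ {t ∈ Set.Ioo 0 p | missingColors H c (F t) = ∅}.ncard :=
        ncard_le_ncard_filter_eq_empty hp hdisj hcover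
    _ ≤ {z | H.Adj x z ∧ missingColors H c z = ∅}.ncard :=
        Set.ncard_le_ncard_of_injOn F (fun t ht => ⟨hF.adj t ht.1.1 ht.1.2, ht.2⟩)
          (hF.injOn.mono fun _ ht => ht.1.2)

end Adjacency

section EdgeColoringNumber

variable {G : SimpleGraph V} {k : ℕ}

lemma hasEdgeColoring_of_isProperEdgeColoring {c : Sym2 V → Fin k}
    (hc : IsProperEdgeColoring G c) : HasEdgeColoring G k := by
  refine ⟨fun e => c e, fun e₁ e₂ hne ⟨v, hv₁, hv₂⟩ heq => hne ?_⟩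
  obtain ⟨a, ha⟩ := Sym2.mem_iff_exists.mp hv₁
  obtain ⟨b, hb⟩ := Sym2.mem_iff_exists.mp hv₂
  have hva : G.Adj v a := by rw [← mem_edgeSet, ← ha]; exact e₁.2
  have hvb : G.Adj v b := by rw [← mem_edgeSet, ← hb]; exact e₂.2
  dsimp only at heq
  rw [ha, hb] at heq
  exact Subtype.ext (by rw [ha, hb, hc hva hvb heq])

lemma exists_isProperEdgeColoring_of_hasEdgeColoring (h : HasEdgeColoring G k) (hk : 0 < k) :
    ∃ c : Sym2 V → Fin k, IsProperEdgeColoring G c := by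
  obtain ⟨f, hf⟩ := h
  refine ⟨fun e => if he : e ∈ G.edgeSet then f ⟨e, he⟩ else ⟨0, hk⟩, fun v a b ha hb hab => ?_⟩
  dsimp only at hab
  rw [dif_pos ((G.mem_edgeSet).mpr ha), dif_pos ((G.mem_edgeSet).mpr hb)] at hab
  by_contra hne
  exact hf _ _ (fun h => hne (Sym2.congr_right.mp (congrArg Subtype.val h)))
    ⟨v, Sym2.mem_mk_left _ _, Sym2.mem_mk_left _ _⟩ hab

lemma hasEdgeColoring_chromIdx [Finite V] (G : SimpleGraph V) :
    HasEdgeColoring G (chromIdx G) :=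
  Nat.sInf_mem (s := {k | HasEdgeColoring G k}) ⟨Nat.card G.edgeSet, ⟨fun e => Finite.equivFin _ e,
    fun _ _ hne _ h => hne ((Finite.equivFin _).injective h)⟩⟩

lemma not_hasEdgeColoring_of_lt_chromIdx (h : k < chromIdx G) : ¬HasEdgeColoring G k :=
  fun hk => (Nat.sInf_le hk).not_gt h

end EdgeColoringNumber

section Criticality

variable {G : SimpleGraph V} {x y v : V}

lemma ndeg_deleteEdges_add_one [Finite V] (hxy : G.Adj x y) :
    ndeg (G.deleteEdges {s(x, y)}) x + 1 = ndeg G x := by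
  have : (G.deleteEdges {s(x, y)}).neighborSet x = G.neighborSet x \ {y} := by
    ext z
    simp only [mem_neighborSet, deleteEdges_adj, Set.mem_singleton_iff, Sym2.congr_right,
      Set.mem_sdiff]
  rw [ndeg, ndeg, this, Set.ncard_sdiff_singleton_add_one (show y ∈ G.neighborSet x from hxy)]

lemma ndeg_deleteEdges_of_ne (hx : v ≠ x) (hy : v ≠ y) :
    ndeg (G.deleteEdges {s(x, y)}) v = ndeg G v := by
  have : (G.deleteEdges {s(x, y)}).neighborSet v = G.neighborSet v := by
    ext z
    simp [hx, hy]
  rw [ndeg, ndeg, this]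

theorem vizing_adjacency [Finite V] {Δ : ℕ} (hmax : ∀ v, ndeg G v ≤ Δ)
    (hG : ¬HasEdgeColoring G Δ) (hH : HasEdgeColoring (G.deleteEdges {s(x, y)}) Δ)
    (hxy : G.Adj x y) :
    Δ + 1 ≤ ndeg G y + {z | z ≠ y ∧ G.Adj x z ∧ ndeg G z = Δ}.ncard := by
  set H := G.deleteEdges {s(x, y)}
  have hdx : ndeg H x + 1 = ndeg G x := ndeg_deleteEdges_add_one hxy
  have hdy : ndeg H y + 1 = ndeg G y := by
    rw [← ndeg_deleteEdges_add_one hxy.symm, Sym2.eq_swap]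
  have hΔ : 0 < Δ := by
    have := hmax y
    omega
  obtain ⟨c, hc⟩ := exists_isProperEdgeColoring_of_hasEdgeColoring hH hΔ
  have hcrit : IsCriticalPair H (Fin Δ) x y := fun c hc => Set.disjoint_left.mpr
    fun α hαx hαy => hG (hasEdgeColoring_of_isProperEdgeColoring (hc.update
      (fun _ _ hab => or_iff_not_imp_right.mpr fun h => deleteEdges_adj.mpr ⟨hab, h⟩) hαx hαy))
  have hx : (missingColors H c x).Nonempty := by
    rw [Set.nonempty_iff_ne_empty, Ne, missingColors_eq_empty_iff hc, Nat.card_eq_fintype_card,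
      Fintype.card_fin]
    have := hmax x
    omega
  have hset : {z | H.Adj x z ∧ missingColors H c z = ∅} =
      {z | z ≠ y ∧ G.Adj x z ∧ ndeg G z = Δ} := by
    ext z
    simp only [Set.mem_ofPred_eq, missingColors_eq_empty_iff hc, Nat.card_eq_fintype_card,
      Fintype.card_fin, H, deleteEdges_adj, Set.mem_singleton_iff, Sym2.congr_right]
    constructor
    · rintro ⟨⟨hxz, hzy⟩, hz⟩
      exact ⟨hzy, hxz, ndeg_deleteEdges_of_ne hxz.ne.symm hzy ▸ hz⟩
    · rintro ⟨hzy, hxz, hz⟩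
      exact ⟨⟨hxz, hzy⟩, (ndeg_deleteEdges_of_ne hxz.ne.symm hzy).trans hz⟩
  have hVAL := hcrit.ncard_missingColors_le hxy.ne (by simp [H]) hc hx
  have hy := ncard_missingColors_add_ndeg hc y
  rw [hset] at hVAL
  rw [Nat.card_eq_fintype_card, Fintype.card_fin] at hy
  omega

end Criticality

section BetweenGraph

variable {G : SimpleGraph V} {T : Set V} {x y : V}

lemma ndeg_betweenGraph_of_notMem (hx : x ∉ T) :
    ndeg (betweenGraph G T) x = (G.neighborSet x ∩ T).ncard := by
  unfold ndeg
  congr 1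
  ext z
  simp [betweenGraph, hx]

lemma ndeg_betweenGraph_of_mem (hT : IsIndep G T) (hy : y ∈ T) :
    ndeg (betweenGraph G T) y = ndeg G y := by
  unfold ndeg
  congr 1
  ext z
  simpa [betweenGraph, hy] using fun h hz => hT y hy z hz h

lemma ncard_major_add_ncard_minor_le [Finite V] (G : SimpleGraph V) (T : Set V) (Δ : ℕ)
    (x y : V) :
    {z | z ≠ y ∧ G.Adj x z ∧ ndeg G z = Δ}.ncard + {z | z ∉ T ∧ G.Adj x z ∧ ndeg G z < Δ}.ncard ≤
      (G.neighborSet x \ T).ncard + {y' ∈ T | ndeg G y' = Δ}.ncard := by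
  set D := {z | z ≠ y ∧ G.Adj x z ∧ ndeg G z = Δ}
  have hDT : (D ∩ T).ncard ≤ {y' ∈ T | ndeg G y' = Δ}.ncard :=
    Set.ncard_le_ncard fun z hz => ⟨hz.2, hz.1.2.2⟩
  have hDσ : (D \ T).ncard + {z | z ∉ T ∧ G.Adj x z ∧ ndeg G z < Δ}.ncard ≤
      (G.neighborSet x \ T).ncard := by
    have hdisj : Disjoint (D \ T) {z | z ∉ T ∧ G.Adj x z ∧ ndeg G z < Δ} :=
      Set.disjoint_left.mpr fun _ hD hσ => hσ.2.2.ne hD.1.2.2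
    rw [← Set.ncard_union_eq hdisj]
    exact Set.ncard_le_ncard (Set.union_subset (fun z hz => ⟨hz.1.2.1, hz.2⟩)
      fun z hz => ⟨hz.2.1, hz.1⟩)
  have := Set.ncard_inter_add_ncard_sdiff_eq_ncard D T
  omega

end BetweenGraph

theorem vizing_stmt_3 [Fintype V] (G : SimpleGraph V) (Δ : ℕ)
    (hcrit : IsDeltaCritical G Δ) (T : Set V) (hT : IsIndep G T) :
    ∀ x ∉ T, ∀ y ∈ T, G.Adj x y →
      ndeg (betweenGraph G T) x + 1 + {z : V | z ∉ T ∧ G.Adj x z ∧ ndeg G z < Δ}.ncard ≤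
        ndeg (betweenGraph G T) y + {y' ∈ T | ndeg G y' = Δ}.ncard := by
  intro x hxT y hyT hxy
  obtain ⟨-, ⟨hmax, -⟩, hchrom, hchromDel⟩ := hcrit
  have hVAL := vizing_adjacency hmax (not_hasEdgeColoring_of_lt_chromIdx (by omega))
    (hchromDel s(x, y) hxy ▸ hasEdgeColoring_chromIdx _) hxy
  have hsplit := Set.ncard_inter_add_ncard_sdiff_eq_ncard (G.neighborSet x) T
  have := ncard_major_add_ncard_minor_le G T Δ x y
  have := hmax x
  rw [ndeg_betweenGraph_of_notMem hxT, ndeg_betweenGraph_of_mem hT hyT]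
  rw [← ndeg] at hsplit
  omega

end VizingTwoFactor
end

section
/- Let G be a graph without a 2-factor and let (S,T) be a minimum barrier, i.e., disjoint sets with δ_G(S,T) ≤ −2 minimizing |S ∪ T|. Then T is an independent set in G. -/
/-!
If `x, y ∈ T` were adjacent, `(S, T \ {y})` would again be a barrier, contradicting minimality.
Removing `y` from `T` lowers the degree sum by `deg_{G−S}(y) ≥ 1 + |N(y) \ (S ∪ T)|`, raises
`−2|T|` by `2`, and lowers `h` by at most `|N(y) \ (S ∪ T)|`, because a component of
`G − (S ∪ T)` not adjacent to `y` remains a component with the same edges to `T \ {y}`. So `δ`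
grows by at most `1`. But `δ` is always even: the degree sum counts the edges inside `T` twice and
the edges from the components to `T` once, and modulo `2` the latter number is `h`.
-/

open SimpleGraph

namespace VizingTwoFactor

variable {V : Type*}

section

variable {G : SimpleGraph V}

lemma compl_eq_union_compl_union {S T : Set V} (hST : Disjoint S T) :
    Sᶜ = T ∪ (S ∪ T)ᶜ := by
  ext x
  have := hST.notMem_of_mem_right (a := x)
  simp only [Set.mem_compl_iff, Set.mem_union]
  tauto

variable {U : Set V}

lemma mem_csupp_iff {C : (G.induce U).ConnectedComponent} {x : V} :
    x ∈ csupp G U C ↔ ∃ h : x ∈ U, (G.induce U).connectedComponentMk ⟨x, h⟩ = C := by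
  simp [csupp, ConnectedComponent.mem_supp_iff]

lemma csupp_subset (C : (G.induce U).ConnectedComponent) : csupp G U C ⊆ U := by
  rintro _ ⟨y, -, rfl⟩
  exact y.2

lemma eq_of_mem_csupp {C D : (G.induce U).ConnectedComponent} {x : V}
    (hC : x ∈ csupp G U C) (hD : x ∈ csupp G U D) : C = D := by
  obtain ⟨_, rfl⟩ := mem_csupp_iff.mp hC
  obtain ⟨_, rfl⟩ := mem_csupp_iff.mp hD
  rfl

lemma csupp_injective : Function.Injective (csupp G U) := by
  intro C D h
  obtain ⟨y, rfl⟩ := C.exists_rep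
  have hy : (y : V) ∈ csupp G U ((G.induce U).connectedComponentMk y) :=
    mem_csupp_iff.mpr ⟨y.2, rfl⟩
  exact eq_of_mem_csupp hy (h ▸ hy)

lemma pairwise_disjoint_csupp : Pairwise fun C D => Disjoint (csupp G U C) (csupp G U D) :=
  fun _ _ hCD => Set.disjoint_left.mpr fun _ hC hD => hCD (eq_of_mem_csupp hC hD)

lemma mem_csupp_of_walk {U' : Set V} {C : (G.induce U).ConnectedComponent}
    (hC : ∀ u ∈ csupp G U C, ∀ w ∈ U', G.Adj u w → w ∈ U) {a b : U'}
    (p : (G.induce U').Walk a b) (ha : (a : V) ∈ csupp G U C) : (b : V) ∈ csupp G U C := by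
  induction p with
  | nil => exact ha
  | @cons a a' b hadj _ ih =>
    apply ih
    obtain ⟨haU, rfl⟩ := mem_csupp_iff.mp ha
    have ha'U : (a' : V) ∈ U := hC a ha a' a'.2 hadj
    exact mem_csupp_iff.mpr ⟨ha'U, ConnectedComponent.connectedComponentMk_eq_of_adj
      (G := G.induce U) (v := ⟨a', ha'U⟩) (w := ⟨a, haU⟩) hadj.symm⟩

lemma csupp_map_induceHomOfLE {U' : Set V} (h : U ⊆ U') (C : (G.induce U).ConnectedComponent)
    (hC : ∀ u ∈ csupp G U C, ∀ w ∈ U', G.Adj u w → w ∈ U) :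
    csupp G U' (C.map (G.induceHomOfLE h).toHom) = csupp G U C := by
  obtain ⟨y, rfl⟩ := C.exists_rep
  have hy : (y : V) ∈ csupp G U ((G.induce U).connectedComponentMk y) :=
    mem_csupp_iff.mpr ⟨y.2, rfl⟩
  apply Set.Subset.antisymm
  · intro x hx
    obtain ⟨hxU', hxC⟩ := mem_csupp_iff.mp hx
    obtain ⟨p⟩ := ConnectedComponent.exact (hxC.trans (ConnectedComponent.map_mk _ y))
    exact mem_csupp_of_walk hC p.reverse hy
  · intro x hx
    obtain ⟨hxU, hxC⟩ := mem_csupp_iff.mp hx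
    exact mem_csupp_iff.mpr ⟨h hxU, by rw [← hxC]; rfl⟩

lemma eBetween_diff_singleton {A : Set V} (B : Set V) {v : V} (hv : ∀ a ∈ A, ¬ G.Adj a v) :
    eBetween G A (B \ {v}) = eBetween G A B := by
  unfold eBetween
  congr 1
  ext ⟨a, b⟩
  simp only [Set.mem_ofPred_eq, Set.mem_sdiff, Set.mem_singleton_iff]
  exact ⟨fun ⟨ha, ⟨hb, _⟩, hab⟩ => ⟨ha, hb, hab⟩,
    fun ⟨ha, hb, hab⟩ => ⟨ha, ⟨hb, by rintro rfl; exact hv a ha hab⟩, hab⟩⟩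

end

section

variable [Finite V] {G : SimpleGraph V} {S T : Set V}

lemma degIn_union {A B : Set V} (hAB : Disjoint A B) (v : V) :
    degIn G (A ∪ B) v = degIn G A v + degIn G B v := by
  rw [degIn, Set.inter_union_distrib_left,
    Set.ncard_union_eq (hAB.mono Set.inter_subset_right Set.inter_subset_right)]
  rfl

lemma finsum_mem_degIn_eq_eBetween (A B : Set V) :
    ∑ᶠ w ∈ B, degIn G A w = eBetween G A B := by
  have hpairs : {p : V × V | p.1 ∈ A ∧ p.2 ∈ B ∧ G.Adj p.1 p.2}
      = ⋃ w ∈ B, (·, w) '' (G.neighborSet w ∩ A) := by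
    ext ⟨a, w⟩
    simp [G.adj_comm w a, and_comm]
  rw [eBetween, hpairs, (Set.toFinite B).ncard_biUnion (fun _ _ => Set.toFinite _)]
  · refine finsum_mem_congr rfl fun w _ => ?_
    exact (Set.ncard_image_of_injective _ fun a b h => congrArg Prod.fst h).symm
  · intro w _ w' _ hww'
    simp only [Function.onFun, Set.disjoint_left, Set.mem_image]
    rintro _ ⟨a, -, rfl⟩ ⟨b, -, hb⟩
    exact hww' (congrArg Prod.snd hb).symm

lemma eBetween_union_left {A A' : Set V} (hA : Disjoint A A') (B : Set V) :
    eBetween G (A ∪ A') B = eBetween G A B + eBetween G A' B := by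
  simp_rw [← finsum_mem_degIn_eq_eBetween, degIn_union hA]
  exact finsum_mem_add_distrib (Set.toFinite B)

lemma eBetween_eq_finsum_components (U B : Set V) :
    eBetween G U B = ∑ᶠ C : (G.induce U).ConnectedComponent, eBetween G (csupp G U C) B := by
  have hpairs : {p : V × V | p.1 ∈ U ∧ p.2 ∈ B ∧ G.Adj p.1 p.2}
      = ⋃ C : (G.induce U).ConnectedComponent,
          {p : V × V | p.1 ∈ csupp G U C ∧ p.2 ∈ B ∧ G.Adj p.1 p.2} := by
    ext ⟨a, w⟩
    simp only [Set.mem_ofPred_eq, Set.mem_iUnion]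
    exact ⟨fun ⟨ha, h⟩ => ⟨_, mem_csupp_iff.mpr ⟨ha, rfl⟩, h⟩,
      fun ⟨C, ha, h⟩ => ⟨csupp_subset C ha, h⟩⟩
  rw [eBetween, hpairs, Set.ncard_iUnion_of_finite (fun _ => Set.toFinite _)]
  · rfl
  · exact fun C D hCD => Set.disjoint_left.mpr fun p hC hD =>
      pairwise_disjoint_csupp hCD |>.ne_of_mem hC.1 hD.1 rfl

lemma even_eBetween_self (T : Set V) : Even (eBetween G T T) := by
  classical
  have : Fintype V := Fintype.ofFinite V
  let e : {p : V × V | p.1 ∈ T ∧ p.2 ∈ T ∧ G.Adj p.1 p.2} ≃ (G.induce T).Dart :=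
    { toFun := fun p => ⟨(⟨p.1.1, p.2.1⟩, ⟨p.1.2, p.2.2.1⟩), p.2.2.2⟩
      invFun := fun d => ⟨(d.fst, d.snd), d.fst.2, d.snd.2, d.adj⟩
      left_inv := fun _ => rfl
      right_inv := fun _ => rfl }
  rw [eBetween, ← Nat.card_coe_set_eq, Nat.card_congr e, Nat.card_eq_fintype_card,
    dart_card_eq_twice_card_edges]
  exact even_two_mul _

lemma even_deltaST (hST : Disjoint S T) : Even (deltaST G S T) := by
  classical
  have : Fintype V := Fintype.ofFinite V
  have hsum :
      ∑ᶠ w ∈ T, (degIn G Sᶜ w : ℤ) = eBetween G T T + eBetween G (S ∪ T)ᶜ T := by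
    rw [← Nat.cast_finsum_mem (Set.toFinite T), finsum_mem_degIn_eq_eBetween,
      compl_eq_union_compl_union hST,
      eBetween_union_left (Set.disjoint_compl_right_iff_subset.mpr Set.subset_union_right),
      Nat.cast_add]
  -- a component is odd exactly when its summand in `eBetween G (S ∪ T)ᶜ T` is odd
  have hodd : Even ((eBetween G (S ∪ T)ᶜ T : ℤ) - hNum G S T) := by
    rw [Int.even_sub, Int.even_coe_nat, Int.even_coe_nat, eBetween_eq_finsum_components,
      finsum_eq_sum_of_fintype, Finset.even_sum_iff_even_card_odd, hNum, oddComps,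
      Set.ncard_eq_toFinset_card', Set.toFinset_ofPred]
  obtain ⟨a, ha⟩ := (even_eBetween_self (G := G) T).natCast (α := ℤ)
  obtain ⟨b, hb⟩ := hodd
  refine ⟨S.ncard - T.ncard + a + b, ?_⟩
  rw [deltaST, hsum]
  linarith

lemma ncard_components_adj_le (U : Set V) (v : V) :
    {C : (G.induce U).ConnectedComponent | ∃ u ∈ csupp G U C, G.Adj v u}.ncard ≤
      degIn G U v :=
  calc _ ≤ ((G.induce U).connectedComponentMk '' {u : U | G.Adj v u}).ncard := by
        refine Set.ncard_le_ncard ?_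
        rintro C ⟨u, hu, hvu⟩
        obtain ⟨huU, rfl⟩ := mem_csupp_iff.mp hu
        exact ⟨⟨u, huU⟩, hvu, rfl⟩
    _ ≤ {u : U | G.Adj v u}.ncard := Set.ncard_image_le
    _ = degIn G U v := by
        rw [degIn, ← Set.ncard_preimage_of_injective_subset_range Subtype.val_injective
          (by simp : G.neighborSet v ∩ U ⊆ Set.range ((↑) : U → V))]
        congr
        ext u
        simp

lemma hNum_le_hNum_diff_singleton_add (S T : Set V) (v : V) :
    hNum G S T ≤ hNum G S (T \ {v}) + degIn G (S ∪ T)ᶜ v := by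
  have hU : (S ∪ T)ᶜ ⊆ (S ∪ T \ {v})ᶜ :=
    Set.compl_subset_compl.mpr (Set.union_subset_union_right S Set.sdiff_subset)
  set f := (G.induceHomOfLE hU).toHom
  set A := {C : (G.induce (S ∪ T)ᶜ).ConnectedComponent | ∃ u ∈ csupp G _ C, G.Adj v u}
  have hnadj : ∀ C ∉ A, ∀ u ∈ csupp G _ C, ¬ G.Adj u v :=
    fun C hC u hu huv => hC ⟨u, hu, huv.symm⟩
  -- a component of `G − (S ∪ T)` not adjacent to `v` is still one of `G − (S ∪ (T \ {v}))`
  have hclosed : ∀ C ∉ A, ∀ u ∈ csupp G _ C,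
      ∀ w ∈ (S ∪ T \ {v})ᶜ, G.Adj u w → w ∈ (S ∪ T)ᶜ := by
    intro C hC u hu w hw huw
    have hwv : w ≠ v := by rintro rfl; exact hnadj C hC u hu huw
    simp only [Set.mem_compl_iff, Set.mem_union, Set.mem_sdiff, Set.mem_singleton_iff]
      at hw ⊢
    tauto
  have hmaps : ∀ C ∈ oddComps G S T \ A, C.map f ∈ oddComps G S (T \ {v}) := by
    rintro C ⟨hodd, hC⟩
    change Odd (eBetween G (csupp G _ (C.map f)) (T \ {v}))
    rwa [csupp_map_induceHomOfLE hU C (hclosed C hC), eBetween_diff_singleton T (hnadj C hC)]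
  have hinj : Set.InjOn (·.map f) (oddComps G S T \ A) := by
    intro C hC D hD hCD
    apply csupp_injective
    rw [← csupp_map_induceHomOfLE hU C (hclosed C hC.2),
      ← csupp_map_induceHomOfLE hU D (hclosed D hD.2)]
    exact congrArg _ hCD
  calc hNum G S T = (oddComps G S T ∩ A).ncard + (oddComps G S T \ A).ncard :=
        (Set.ncard_inter_add_ncard_sdiff_eq_ncard _ _).symm
    _ ≤ A.ncard + hNum G S (T \ {v}) :=
        add_le_add (Set.ncard_le_ncard Set.inter_subset_right)
          (Set.ncard_le_ncard_of_injOn _ hmaps hinj)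
    _ ≤ _ := by linarith [ncard_components_adj_le (G := G) (S ∪ T)ᶜ v]

lemma deltaST_diff_singleton_le (hST : Disjoint S T) {u v : V} (hv : v ∈ T) (hu : u ∈ T)
    (hvu : G.Adj v u) : deltaST G S (T \ {v}) ≤ deltaST G S T + 1 := by
  have hsplit : ∑ᶠ w ∈ T, (degIn G Sᶜ w : ℤ)
      = degIn G Sᶜ v + ∑ᶠ w ∈ T \ {v}, (degIn G Sᶜ w : ℤ) := by
    conv_lhs => rw [← Set.insert_sdiff_self_of_mem hv]
    exact finsum_mem_insert _ (fun h => h.2 rfl) (Set.toFinite _)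
  have hcard : (T \ {v}).ncard + 1 = T.ncard := Set.ncard_sdiff_singleton_add_one hv
  have hdeg : degIn G (S ∪ T)ᶜ v + 1 ≤ degIn G Sᶜ v := by
    rw [compl_eq_union_compl_union hST,
      degIn_union (Set.disjoint_compl_right_iff_subset.mpr Set.subset_union_right)]
    have : 0 < degIn G T v := (Set.ncard_pos (Set.toFinite _)).mpr ⟨u, hvu, hu⟩
    omega
  have hh := hNum_le_hNum_diff_singleton_add (G := G) S T v
  unfold deltaST
  rw [hsplit]
  zify at hcard hdeg hh
  linarith

lemma IsBarrier.diff_singleton (h : IsBarrier G S T) {u v : V} (hv : v ∈ T) (hu : u ∈ T)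
    (hvu : G.Adj v u) : IsBarrier G S (T \ {v}) := by
  have hdisj : Disjoint S (T \ {v}) := h.1.mono_right Set.sdiff_subset
  have hδ := h.2
  obtain ⟨k, hk⟩ := even_deltaST (G := G) hdisj
  have := deltaST_diff_singleton_le h.1 hv hu hvu
  exact ⟨hdisj, by omega⟩

end

theorem vizing_stmt_7_general [Fintype V] (G : SimpleGraph V) (S T : Set V)
    (hmin : IsMinBarrier G S T) : IsIndep G T := by
  intro u hu v hv huv
  have hsmaller : (S ∪ T \ {u}).ncard < (S ∪ T).ncard := by
    refine Set.ncard_lt_ncard ((Set.ssubset_iff_of_subset ?_).mpr ⟨u, Or.inr hu, ?_⟩)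
    · exact Set.union_subset_union_right S Set.sdiff_subset
    · rintro (huS | ⟨-, huu⟩)
      exacts [hmin.1.1.notMem_of_mem_left huS hu, huu rfl]
  exact (hmin.2 S (T \ {u}) (hmin.1.diff_singleton hu hv huv)).not_gt hsmaller

theorem vizing_stmt_7 [Fintype V] (G : SimpleGraph V) (S T : Set V)
    (hG : ¬ HasTwoFactor G) (hmin : IsMinBarrier G S T) : IsIndep G T :=
  vizing_stmt_7_general G S T hmin

end VizingTwoFactor
end
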